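/- arXiv:math/0212380 — 2 statements merged into one kernel-verified Lean document; each statement's English description precedes it below -/
import Mathlib

section
/- In the semidirect product G = F_∞ ⋊_τ ℤ with subgroup F, for every finite subset S of F_∞ there exists a point x of the left coset space G/F such that ι_{F_∞}(s)·x = x for every s ∈ S; that is, every finite subset of F_∞ has a common fixed point in G/F under the left translation action. -/
/-- `Γ n` is the normal subgroup of the free group on generators indexed by `ℤ`
generated by the generators `xᵢ` with `i ≤ n`. -/
def Gamma (n : ℤ) : Subgroup (FreeGroup ℤ) :=
  Subgroup.normalClosure (FreeGroup.of '' {i : ℤ | i ≤ n})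

/-- The shift action `τ : ℤ → Aut(F_∞)`, with `τ k (x m) = x (m + k)`. -/
def tauHom : Multiplicative ℤ →* MulAut (FreeGroup ℤ) :=
  MonoidHom.mk' (fun k => FreeGroup.freeGroupCongr (Equiv.addRight k.toAdd)) (by
    intro k l
    rw [MulAut.mul_def, FreeGroup.freeGroupCongr_trans]
    ext x
    simp [add_assoc, add_comm])

/-- `G = F_∞ ⋊_τ ℤ`. -/
abbrev SDG := FreeGroup ℤ ⋊[tauHom] Multiplicative ℤ

/-- `F` is the image of `Γ 0` under the canonical embedding `F_∞ → G`. -/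
def FF : Subgroup SDG := (Gamma 0).map SemidirectProduct.inl

/-!
The coset `t^N F` of `t = (0, 1)` has stabilizer `t^N F t^{-N} = ι(τ_N Γ₀) = ι(Γ_N)`.
A finite subset of `F_∞` involves only finitely many generators, so it lies in the subgroup
generated by the `x_i` with `i ≤ N` for some `N`, hence in `Γ_N`, and `t^N F` is a common
fixed point.
-/

open SemidirectProduct

namespace FreeGroup

variable {α : Type*} [Preorder α]

theorem closure_of_Iic_mono : Monotone fun k : α => Subgroup.closure (of '' Set.Iic k) :=
  fun _ _ hab => Subgroup.closure_mono (Set.image_mono (Set.Iic_subset_Iic.mpr hab))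

variable [IsDirectedOrder α]

theorem exists_mem_closure_of_Iic [Nonempty α] (s : FreeGroup α) :
    ∃ k : α, s ∈ Subgroup.closure (of '' Set.Iic k) := by
  induction s with
  | C1 => exact ⟨Classical.arbitrary α, one_mem _⟩
  | of i => exact ⟨i, Subgroup.subset_closure ⟨i, le_rfl, rfl⟩⟩
  | inv_of i ih =>
    obtain ⟨k, hk⟩ := ih
    exact ⟨k, inv_mem hk⟩
  | mul x y hx hy =>
    obtain ⟨k, hk⟩ := hx
    obtain ⟨l, hl⟩ := hy
    obtain ⟨m, hkm, hlm⟩ := directed_of (· ≤ ·) k l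
    exact ⟨m, mul_mem (closure_of_Iic_mono hkm hk) (closure_of_Iic_mono hlm hl)⟩

theorem exists_forall_mem_closure_of_Iic [Nonempty α] (S : Finset (FreeGroup α)) :
    ∃ N : α, ∀ s ∈ S, s ∈ Subgroup.closure (of '' Set.Iic N) := by
  classical
  choose k hk using exists_mem_closure_of_Iic (α := α)
  obtain ⟨N, hN⟩ := (S.image k).exists_le
  exact ⟨N, fun s hs => closure_of_Iic_mono (hN _ (Finset.mem_image_of_mem k hs)) (hk s)⟩

end FreeGroup

theorem closure_of_Iic_le_Gamma (n : ℤ) :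
    Subgroup.closure (FreeGroup.of '' Set.Iic n) ≤ Gamma n :=
  Subgroup.closure_le_normalClosure

theorem tauHom_ofAdd_of (k i : ℤ) :
    tauHom (Multiplicative.ofAdd k) (FreeGroup.of i) = FreeGroup.of (i + k) :=
  rfl

theorem map_tauHom_Gamma (k n : ℤ) :
    (Gamma n).map (tauHom (Multiplicative.ofAdd k)).toMonoidHom = Gamma (n + k) := by
  rw [Gamma, Subgroup.map_normalClosure _ _ (MulEquiv.surjective _), Gamma, Set.image_image]
  congr 1
  ext x
  constructor
  · rintro ⟨i, hi : i ≤ n, rfl⟩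
    exact ⟨i + k, show i + k ≤ n + k by lia, rfl⟩
  · rintro ⟨i, hi : i ≤ n + k, rfl⟩
    refine ⟨i - k, show i - k ≤ n by lia, ?_⟩
    simp only [MulEquiv.coe_toMonoidHom, tauHom_ofAdd_of, sub_add_cancel]

theorem stabilizer_mk_inr (N : ℤ) :
    MulAction.stabilizer SDG
      (QuotientGroup.mk (inr (Multiplicative.ofAdd N)) : SDG ⧸ FF) = (Gamma N).map inl := by
  have conj_inr_comp_inl : (MulAut.conj (inr (Multiplicative.ofAdd N) : SDG)).toMonoidHom.comp
      inl = inl.comp (tauHom (Multiplicative.ofAdd N)).toMonoidHom :=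
    MonoidHom.ext fun s => (inl_aut _ s).symm
  have mk_inr_eq_smul_one : (QuotientGroup.mk (inr (Multiplicative.ofAdd N)) : SDG ⧸ FF) =
      (inr (Multiplicative.ofAdd N) : SDG) • ((1 : SDG) : SDG ⧸ FF) := by
    rw [MulAction.Quotient.smul_mk, smul_eq_mul, mul_one]
  rw [mk_inr_eq_smul_one, MulAction.stabilizer_smul_eq_stabilizer_map_conj,
    MulAction.stabilizer_quotient, FF, Subgroup.map_map, conj_inr_comp_inl, ← Subgroup.map_map,
    map_tauHom_Gamma, zero_add]

/-- Every finite subset `S` of `F_∞` has a common fixed point in the coset space `G/F`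
under the left translation action (through the embedding `ι_{F_∞}`). -/
theorem finite_common_fixed_point : ∀ S : Finset (FreeGroup ℤ),
    ∃ x : SDG ⧸ FF, ∀ s ∈ S, (SemidirectProduct.inl s : SDG) • x = x := by
  intro S
  obtain ⟨N, hN⟩ := FreeGroup.exists_forall_mem_closure_of_Iic S
  refine ⟨QuotientGroup.mk (inr (Multiplicative.ofAdd N)), fun s hs => ?_⟩
  rw [← MulAction.mem_stabilizer_iff, stabilizer_mk_inr]
  exact Subgroup.mem_map_of_mem inl (closure_of_Iic_le_Gamma N (hN s hs))
end

section
/- There is a bijection Φ from the left coset space G/F onto the disjoint union (sigma type) Σ_{n∈ℤ} F_∞/Γ_n which is equivariant for the F_∞-actions: for every s ∈ F_∞ and every x ∈ G/F, if Φ(x) = (n, c) with c ∈ F_∞/Γ_n, then Φ(ι_{F_∞}(s)·x) = (n, s·c), where s·c denotes left translation of the coset c by s in F_∞/Γ_n. -/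
open SemidirectProduct

section

variable {N H : Type*} [Group N] [Group H] {φ : H →* MulAut N}

lemma SemidirectProduct.mem_map_inl_iff {K : Subgroup N} {g : N ⋊[φ] H} :
    g ∈ K.map inl ↔ g.right = 1 ∧ g.left ∈ K := by
  constructor
  · rintro ⟨k, hk, rfl⟩
    exact ⟨rfl, hk⟩
  · rintro ⟨hr, hl⟩
    exact ⟨g.left, hl, by ext <;> simp [hr]⟩

lemma SemidirectProduct.quotient_mk_eq_iff {K : Subgroup N} {a b : N ⋊[φ] H} :
    (a : (N ⋊[φ] H) ⧸ K.map inl) = b ↔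
      a.right = b.right ∧ a.left⁻¹ * b.left ∈ K.map (φ a.right).toMonoidHom := by
  rw [QuotientGroup.eq, mem_map_inl_iff, Subgroup.mem_map_equiv, mul_right, inv_right,
    inv_mul_eq_one, mul_left, inv_left, inv_right, map_mul, map_inv φ, MulAut.inv_def]

lemma QuotientGroup.sigma_mk_eq_iff {ι : Type*} {L : ι → Subgroup N} {i j : ι} {n n' : N} :
    (⟨i, n⟩ : Σ i, N ⧸ L i) = ⟨j, n'⟩ ↔ i = j ∧ n⁻¹ * n' ∈ L i := by
  rw [Sigma.mk.inj_iff]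
  constructor
  · rintro ⟨rfl, h⟩
    exact ⟨rfl, QuotientGroup.eq.mp (eq_of_heq h)⟩
  · rintro ⟨rfl, hn⟩
    exact ⟨rfl, heq_of_eq (QuotientGroup.eq.mpr hn)⟩

variable (K : Subgroup N) (L : H → Subgroup N) (hL : ∀ h, K.map (φ h).toMonoidHom = L h)

noncomputable def SemidirectProduct.quotientInlEquivSigma :
    (N ⋊[φ] H) ⧸ K.map inl ≃ Σ h, N ⧸ L h :=
  Equiv.ofBijective
    (Quotient.lift (fun g : N ⋊[φ] H => (⟨g.right, g.left⟩ : Σ h, N ⧸ L h)) fun _ _ hab =>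
      QuotientGroup.sigma_mk_eq_iff.mpr (hL _ ▸ quotient_mk_eq_iff.mp (Quotient.sound hab)))
    ⟨by
      rintro ⟨a⟩ ⟨b⟩ hab
      exact quotient_mk_eq_iff.mpr (hL a.right ▸ QuotientGroup.sigma_mk_eq_iff.mp hab),
    by
      rintro ⟨h, ⟨n⟩⟩
      exact ⟨(⟨n, h⟩ : N ⋊[φ] H), rfl⟩⟩

@[simp]
lemma SemidirectProduct.quotientInlEquivSigma_mk (g : N ⋊[φ] H) :
    quotientInlEquivSigma K L hL g = ⟨g.right, g.left⟩ := rfl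

lemma SemidirectProduct.quotientInlEquivSigma_inl_smul (s : N) (x : (N ⋊[φ] H) ⧸ K.map inl) :
    quotientInlEquivSigma K L hL ((inl s : N ⋊[φ] H) • x) =
      ⟨(quotientInlEquivSigma K L hL x).1, s • (quotientInlEquivSigma K L hL x).2⟩ := by
  induction x using QuotientGroup.induction_on with | H g =>
  rw [MulAction.Quotient.smul_mk, quotientInlEquivSigma_mk, quotientInlEquivSigma_mk,
    MulAction.Quotient.smul_mk, smul_eq_mul, mul_left, mul_right, left_inl, right_inl, map_one,
    one_mul]
  rfl

end

lemma Gamma_map_tauHom (n : ℤ) (k : Multiplicative ℤ) :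
    (Gamma n).map (tauHom k).toMonoidHom = Gamma (n + k.toAdd) := by
  have tauHom_comp_of : ⇑(tauHom k) ∘ FreeGroup.of = FreeGroup.of ∘ (· + k.toAdd) := rfl
  rw [Gamma, Gamma, Subgroup.map_normalClosure _ (tauHom k).toMonoidHom (tauHom k).surjective,
    MulEquiv.coe_toMonoidHom, ← Set.image_comp, tauHom_comp_of, Set.image_comp]
  exact congrArg (Subgroup.normalClosure <| FreeGroup.of '' ·) (Set.image_add_const_Iic _ _)

/-- There is a bijection `Φ` from `G/F` onto the disjoint union `Σ_{n ∈ ℤ} F_∞/Γ n`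
which is equivariant for the `F_∞`-actions: `Φ(ι_{F_∞}(s)·x) = (n, s·c)` whenever
`Φ(x) = (n, c)`. -/
theorem coset_space_decomposition :
    ∃ Φ : (SDG ⧸ FF) ≃ (Σ n : ℤ, FreeGroup ℤ ⧸ Gamma n),
      ∀ (s : FreeGroup ℤ) (x : SDG ⧸ FF),
        Φ ((SemidirectProduct.inl s : SDG) • x) = ⟨(Φ x).1, s • (Φ x).2⟩ :=
  -- `Σ k : Multiplicative ℤ, _ ⧸ Gamma k.toAdd` is definitionally `Σ n : ℤ, _ ⧸ Gamma n`.
  ⟨quotientInlEquivSigma (φ := tauHom) (Gamma 0) (fun k => Gamma k.toAdd)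
      fun k => (Gamma_map_tauHom 0 k).trans (congrArg Gamma (zero_add _)),
    quotientInlEquivSigma_inl_smul _ _ _⟩
end
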